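/- arXiv:0905.4789 — 2 statements merged into one kernel-verified Lean document; each statement's English description precedes it below -/
import Mathlib

section
/- Let s be a Bosbach state on a bounded pseudo-BCK algebra A. Then for all x,y ∈ A: (1) s(x∨₁y) = s(x∨₂y); (2) s(x→y) = s(x⤳y). -/
universe u

class PseudoBCK (A : Type u) extends PartialOrder A where
  arr : A → A → A
  sarr : A → A → A
  one : A
  ax1  : ∀ x y z : A, arr x y ≤ sarr (arr y z) (arr x z)
  ax1' : ∀ x y z : A, sarr x y ≤ arr (sarr y z) (sarr x z)
  ax2  : ∀ x y : A, x ≤ sarr (arr x y) y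
  ax2' : ∀ x y : A, x ≤ arr (sarr x y) y
  ax4  : ∀ x : A, x ≤ one
  ax6  : ∀ x y : A, x ≤ y ↔ arr x y = one
  ax6' : ∀ x y : A, x ≤ y ↔ sarr x y = one

namespace PseudoBCK

variable {A : Type u} [PseudoBCK A]

/-- `x ∨₁ y = (x → y) ⤳ y`. -/
def sup1 (x y : A) : A := sarr (arr x y) y

/-- `x ∨₂ y = (x ⤳ y) → y`. -/
def sup2 (x y : A) : A := arr (sarr x y) y

end PseudoBCK

open PseudoBCK

class BoundedPseudoBCK (A : Type u) extends PseudoBCK A where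
  zero : A
  zero_le : ∀ x : A, zero ≤ x

namespace BoundedPseudoBCK

variable {A : Type u} [BoundedPseudoBCK A]

/-- `x⁻ = x → 0`. -/
def neg (x : A) : A := arr x zero

/-- `x˜ = x ⤳ 0`. -/
def tneg (x : A) : A := sarr x zero

end BoundedPseudoBCK

open BoundedPseudoBCK

/-- A Bosbach state on a bounded pseudo-BCK algebra. -/
def IsBosbachState (A : Type u) [BoundedPseudoBCK A] (s : A → ℝ) : Prop :=
  (∀ x : A, s x ∈ Set.Icc (0 : ℝ) 1) ∧
  s (zero : A) = 0 ∧ s (one : A) = 1 ∧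
  (∀ x y : A, s x + s (arr x y) = s y + s (arr y x)) ∧
  (∀ x y : A, s x + s (sarr x y) = s y + s (sarr y x))

namespace PseudoBCK

variable {A : Type u} [PseudoBCK A]

lemma eq_one_of_one_le {x : A} (h : (one : A) ≤ x) : x = one :=
  le_antisymm (ax4 x) h

lemma arr_eq_one {x y : A} (h : x ≤ y) : arr x y = one := (ax6 x y).1 h
lemma sarr_eq_one {x y : A} (h : x ≤ y) : sarr x y = one := (ax6' x y).1 h

lemma le_of_one_le_sarr {a b : A} (h : (one : A) ≤ sarr a b) : a ≤ b :=
  (ax6' a b).2 (eq_one_of_one_le h)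

lemma le_of_one_le_arr {a b : A} (h : (one : A) ≤ arr a b) : a ≤ b :=
  (ax6 a b).2 (eq_one_of_one_le h)

lemma arr_one (x : A) : arr one x = x := by
  apply le_antisymm
  · exact le_of_one_le_sarr (ax2 one x)
  · have h := ax2' x x
    rwa [sarr_eq_one (le_refl x)] at h

lemma sarr_one (x : A) : sarr one x = x := by
  apply le_antisymm
  · exact le_of_one_le_arr (ax2' one x)
  · have h := ax2 x x
    rwa [arr_eq_one (le_refl x)] at h

lemma le_arr (x y : A) : y ≤ arr x y := by
  have h := ax1 x one y
  rw [arr_eq_one (ax4 x), arr_one] at h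
  exact le_of_one_le_sarr h

lemma le_sarr (x y : A) : y ≤ sarr x y := by
  have h := ax1' x one y
  rw [sarr_eq_one (ax4 x), sarr_one] at h
  exact le_of_one_le_arr h

lemma arr_antitone {a b : A} (c : A) (h : a ≤ b) : arr b c ≤ arr a c := by
  have h1 := ax1 a b c
  rw [arr_eq_one h] at h1
  exact le_of_one_le_sarr h1

lemma sarr_antitone {a b : A} (c : A) (h : a ≤ b) : sarr b c ≤ sarr a c := by
  have h1 := ax1' a b c
  rw [sarr_eq_one h] at h1
  exact le_of_one_le_arr h1

end PseudoBCK

open PseudoBCK in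
theorem stmt_4 {A : Type u} [BoundedPseudoBCK A] (s : A → ℝ)
    (hs : IsBosbachState A s) :
    ∀ x y : A, s (sup1 x y) = s (sup2 x y) ∧ s (arr x y) = s (sarr x y) := by
  obtain ⟨hIcc, h0, h1, hA, hS⟩ := hs
  -- s is monotone
  have mono : ∀ a b : A, a ≤ b → s a ≤ s b := by
    intro a b h
    have := hA a b
    rw [arr_eq_one h, h1] at this
    have := (hIcc (arr b a)).2
    linarith
  -- formulas on comparable pairs
  have fArr : ∀ a b : A, b ≤ a → s (arr a b) = 1 - s a + s b := by
    intro a b h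
    have := hA b a
    rw [arr_eq_one h, h1] at this
    linarith
  have fSarr : ∀ a b : A, b ≤ a → s (sarr a b) = 1 - s a + s b := by
    intro a b h
    have := hS b a
    rw [sarr_eq_one h, h1] at this
    linarith
  intro x y
  have hy1 : y ≤ sup1 x y := le_sarr (arr x y) y
  have hy2 : y ≤ sup2 x y := le_arr (sarr x y) y
  have hx1 : x ≤ sup1 x y := ax2 x y
  have hx2 : x ≤ sup2 x y := ax2' x y
  -- s (sup1 x y) = 1 - s (arr x y) + s y
  have hs1 : s (sup1 x y) = 1 - s (arr x y) + s y := by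
    have := hS (arr x y) y
    rw [sarr_eq_one (le_arr x y), h1] at this
    simpa [sup1] using by linarith
  have hs2 : s (sup2 x y) = 1 - s (sarr x y) + s y := by
    have := hA (sarr x y) y
    rw [arr_eq_one (le_sarr x y), h1] at this
    simpa [sup2] using by linarith
  -- s (arr x y) ≤ s (sarr x y)
  have k1 : s (arr x y) ≤ s (sarr x y) := by
    have hle : sarr (sup1 x y) y ≤ sarr x y := sarr_antitone y hx1
    have := mono _ _ hle
    rw [fSarr _ _ hy1] at this
    linarith
  have k2 : s (sarr x y) ≤ s (arr x y) := by
    have hle : arr (sup2 x y) y ≤ arr x y := arr_antitone y hx2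
    have := mono _ _ hle
    rw [fArr _ _ hy2] at this
    linarith
  have heq : s (arr x y) = s (sarr x y) := le_antisymm k1 k2
  exact ⟨by rw [hs1, hs2, heq], heq⟩
end

section
/- Let A be a bounded pseudo-BCK algebra and m a Bosbach state on A. Then m is a state-morphism if and only if m(x∨₁y) = max{m(x), m(y)} for all x,y ∈ A, or equivalently, if and only if m(x∨₂y) = max{m(x), m(y)} for all x,y ∈ A. -/
universe u

open PseudoBCK

open BoundedPseudoBCK

/-- A state-morphism on a bounded pseudo-BCK algebra:
`m (x → y) = m (x ⤳ y) = min (1 - m x + m y) 1`. -/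
def IsStateMorphism (A : Type u) [BoundedPseudoBCK A] (m : A → ℝ) : Prop :=
  (∀ x : A, m x ∈ Set.Icc (0 : ℝ) 1) ∧
  m (zero : A) = 0 ∧
  (∀ x y : A, m (arr x y) = min (1 - m x + m y) 1) ∧
  (∀ x y : A, m (sarr x y) = min (1 - m x + m y) 1)

section Aux

variable {A : Type u} [PseudoBCK A]

open PseudoBCK

lemma arr_self' (x : A) : arr x x = one := (ax6 x x).1 le_rfl
lemma sarr_self' (x : A) : sarr x x = one := (ax6' x x).1 le_rfl
lemma eq_one_of_one_le' {x : A} (h : one ≤ x) : x = one := le_antisymm (ax4 x) h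

lemma arr_anti' {a b : A} (h : a ≤ b) (c : A) : arr b c ≤ arr a c := by
  have h1 := ax1 a b c
  rw [(ax6 a b).1 h] at h1
  exact (ax6' _ _).2 (eq_one_of_one_le' h1)

lemma sarr_anti' {a b : A} (h : a ≤ b) (c : A) : sarr b c ≤ sarr a c := by
  have h1 := ax1' a b c
  rw [(ax6' a b).1 h] at h1
  exact (ax6 _ _).2 (eq_one_of_one_le' h1)

lemma le_arr' (x y : A) : y ≤ arr x y := by
  have h1 : y ≤ arr one y := by
    have := ax2' y y; rwa [sarr_self'] at this
  exact le_trans h1 (arr_anti' (ax4 x) y)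

lemma le_sarr' (x y : A) : y ≤ sarr x y := by
  have h1 : y ≤ sarr one y := by
    have := ax2 y y; rwa [arr_self'] at this
  exact le_trans h1 (sarr_anti' (ax4 x) y)

end Aux

section BosAux

variable {A : Type u} [BoundedPseudoBCK A] {m : A → ℝ}

open PseudoBCK

lemma bos_mono (hm : IsBosbachState A m) {a b : A} (h : a ≤ b) : m a ≤ m b := by
  obtain ⟨hb, -, h1, h2, -⟩ := hm
  have := h2 a b
  rw [(ax6 a b).1 h, h1] at this
  have hba := (hb (arr b a)).2
  linarith

lemma bos_arr_eq (hm : IsBosbachState A m)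
    (h : ∀ x y : A, m (sup1 x y) = max (m x) (m y)) (x y : A) :
    m (arr x y) = min (1 - m x + m y) 1 := by
  obtain ⟨hb, -, h1, -, h3⟩ := hm
  have key := h3 (arr x y) y
  rw [(ax6' y (arr x y)).1 (le_arr' x y), h1] at key
  have hs : m (sarr (arr x y) y) = max (m x) (m y) := h x y
  rcases le_total (m x) (m y) with hc | hc
  · rw [min_eq_right (by linarith)]
    rw [hs, max_eq_right hc] at key; linarith
  · rw [min_eq_left (by linarith)]
    rw [hs, max_eq_left hc] at key; linarith

lemma bos_sarr_eq (hm : IsBosbachState A m)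
    (h : ∀ x y : A, m (sup1 x y) = max (m x) (m y)) (x y : A) :
    m (sarr x y) = min (1 - m x + m y) 1 := by
  obtain ⟨hb, h0, h1, h2, h3⟩ := hm
  set s : A := sup1 x y with hs
  -- m (sarr s y) = 1 + m y - max (m x) (m y)
  have key := h3 s y
  have hys : y ≤ s := le_sarr' (arr x y) y
  rw [(ax6' y s).1 hys, h1] at key
  have hsv : m s = max (m x) (m y) := h x y
  -- monotonicity: sarr s y ≤ sarr x y
  have hmono : m (sarr s y) ≤ m (sarr x y) :=
    bos_mono ⟨hb, h0, h1, h2, h3⟩ (sarr_anti' (ax2 x y) y)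
  -- upper bound: m (sarr x y) ≤ 1 - m x + m y
  have hub : m (sarr x y) ≤ 1 - m x + m y := by
    have hx2 : m x ≤ m (arr (sarr x y) y) :=
      bos_mono ⟨hb, h0, h1, h2, h3⟩ (ax2' x y)
    have key2 := h2 (sarr x y) y
    rw [(ax6 y (sarr x y)).1 (le_sarr' x y), h1] at key2
    linarith
  have hub1 : m (sarr x y) ≤ 1 := (hb (sarr x y)).2
  rcases le_total (m x) (m y) with hc | hc
  · rw [min_eq_right (by linarith)]
    rw [hsv, max_eq_right hc] at key
    linarith
  · rw [min_eq_left (by linarith)]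
    rw [hsv, max_eq_left hc] at key
    linarith

lemma bos_sarr_eq2 (hm : IsBosbachState A m)
    (h : ∀ x y : A, m (sup2 x y) = max (m x) (m y)) (x y : A) :
    m (sarr x y) = min (1 - m x + m y) 1 := by
  obtain ⟨hb, -, h1, h2, -⟩ := hm
  have key := h2 (sarr x y) y
  rw [(ax6 y (sarr x y)).1 (le_sarr' x y), h1] at key
  have hs : m (arr (sarr x y) y) = max (m x) (m y) := h x y
  rcases le_total (m x) (m y) with hc | hc
  · rw [min_eq_right (by linarith)]
    rw [hs, max_eq_right hc] at key; linarith
  · rw [min_eq_left (by linarith)]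
    rw [hs, max_eq_left hc] at key; linarith

lemma bos_arr_eq2 (hm : IsBosbachState A m)
    (h : ∀ x y : A, m (sup2 x y) = max (m x) (m y)) (x y : A) :
    m (arr x y) = min (1 - m x + m y) 1 := by
  obtain ⟨hb, h0, h1, h2, h3⟩ := hm
  set s : A := sup2 x y with hs
  have key := h2 s y
  have hys : y ≤ s := le_arr' (sarr x y) y
  rw [(ax6 y s).1 hys, h1] at key
  have hsv : m s = max (m x) (m y) := h x y
  have hmono : m (arr s y) ≤ m (arr x y) :=
    bos_mono ⟨hb, h0, h1, h2, h3⟩ (arr_anti' (ax2' x y) y)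
  have hub : m (arr x y) ≤ 1 - m x + m y := by
    have hx2 : m x ≤ m (sarr (arr x y) y) :=
      bos_mono ⟨hb, h0, h1, h2, h3⟩ (ax2 x y)
    have key2 := h3 (arr x y) y
    rw [(ax6' y (arr x y)).1 (le_arr' x y), h1] at key2
    linarith
  have hub1 : m (arr x y) ≤ 1 := (hb (arr x y)).2
  rcases le_total (m x) (m y) with hc | hc
  · rw [min_eq_right (by linarith)]
    rw [hsv, max_eq_right hc] at key
    linarith
  · rw [min_eq_left (by linarith)]
    rw [hsv, max_eq_left hc] at key
    linarith

lemma sm_sup1 (hsm : IsStateMorphism A m) (x y : A) :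
    m (sup1 x y) = max (m x) (m y) := by
  obtain ⟨hb, -, harr, hsarr⟩ := hsm
  have hx := hb x; have hy := hb y
  rw [sup1, hsarr, harr]
  rcases le_total (m x) (m y) with hc | hc
  · rw [max_eq_right hc, min_eq_right (by linarith : (1:ℝ) ≤ 1 - m x + m y),
      min_eq_left (by simp only [Set.mem_Icc] at hy; linarith)]
    ring
  · rw [max_eq_left hc, min_eq_left (by linarith : 1 - m x + m y ≤ (1:ℝ))]
    rw [show 1 - (1 - m x + m y) + m y = m x by ring,
      min_eq_left (by simp only [Set.mem_Icc] at hx; linarith)]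

lemma sm_sup2 (hsm : IsStateMorphism A m) (x y : A) :
    m (sup2 x y) = max (m x) (m y) := by
  obtain ⟨hb, -, harr, hsarr⟩ := hsm
  have hx := hb x; have hy := hb y
  rw [sup2, harr, hsarr]
  rcases le_total (m x) (m y) with hc | hc
  · rw [max_eq_right hc, min_eq_right (by linarith : (1:ℝ) ≤ 1 - m x + m y),
      min_eq_left (by simp only [Set.mem_Icc] at hy; linarith)]
    ring
  · rw [max_eq_left hc, min_eq_left (by linarith : 1 - m x + m y ≤ (1:ℝ))]
    rw [show 1 - (1 - m x + m y) + m y = m x by ring,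
      min_eq_left (by simp only [Set.mem_Icc] at hx; linarith)]

end BosAux

theorem stmt_6 {A : Type u} [BoundedPseudoBCK A] (m : A → ℝ)
    (hm : IsBosbachState A m) :
    (IsStateMorphism A m ↔ ∀ x y : A, m (sup1 x y) = max (m x) (m y)) ∧
    (IsStateMorphism A m ↔ ∀ x y : A, m (sup2 x y) = max (m x) (m y)) := by
  constructor
  · constructor
    · exact fun hsm x y => sm_sup1 hsm x y
    · intro h
      exact ⟨hm.1, hm.2.1, bos_arr_eq hm h, bos_sarr_eq hm h⟩
  · constructor
    · exact fun hsm x y => sm_sup2 hsm x y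
    · intro h
      exact ⟨hm.1, hm.2.1, bos_arr_eq2 hm h, bos_sarr_eq2 hm h⟩
end
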